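/- arXiv:0706.0921 — 2 statements merged into one kernel-verified Lean document; each statement's English description precedes it below -/
import Mathlib

section
/- Lemma (orthogonality of upper and lower boundary values). Let Z be a 2×2 matrix-valued function, analytic on ℂ∖ℝ, such that for every x ∈ ℝ the limits Z₊(x) = lim_{δ→0⁺} Z(x+iδ) and Z₋(x) = lim_{δ→0⁺} Z(x−iδ) exist and define continuous functions on ℝ, and such that there is a constant c with ‖Z(ζ)‖ ≤ c(1+|ζ|)^{−3/4} for all ζ ∉ ℝ. Then ∫_ℝ Z₊(s) Z₋(s)* ds = 0 (the 2×2 zero matrix), where Z₋(s)* denotes the conjugate transpose of Z₋(s). -/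
noncomputable section

open Complex MeasureTheory Filter Topology Set

/-- 2×2 complex matrices. -/
abbrev Mat2 := Matrix (Fin 2) (Fin 2) ℂ

/-- The "twist" matrix 𝔪(z) = diag(z^{-1/4}, z^{1/4}) · (1/√2)[[1,1],[-1,1]] · diag(e^{-iπ/4}, e^{iπ/4}),
with principal branches of the quarter powers (cut along (-∞,0]). -/
def twistMat (z : ℂ) : Mat2 :=
  !![z ^ (-(1:ℂ)/4), 0; 0, z ^ ((1:ℂ)/4)] *
    ((Real.sqrt 2 : ℂ)⁻¹ • !![(1:ℂ), 1; -1, 1]) *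
    !![Complex.exp (-((Real.pi : ℂ) * Complex.I) / 4), 0; 0, Complex.exp ((Real.pi : ℂ) * Complex.I / 4)]

/-- The open ray arg z = 2π/3. -/
def rayPlus : Set ℂ := {z : ℂ | z ≠ 0 ∧ z.arg = 2 * Real.pi / 3}

/-- The open ray arg z = -2π/3. -/
def rayMinus : Set ℂ := {z : ℂ | z ≠ 0 ∧ z.arg = -(2 * Real.pi / 3)}

/-- The open negative real axis (-∞, 0). -/
def negAxis : Set ℂ := {z : ℂ | z.im = 0 ∧ z.re < 0}

/-- Open sector lo < arg z < hi. -/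
def sector (lo hi : ℝ) : Set ℂ := {z : ℂ | lo < z.arg ∧ z.arg < hi}

/-- Lower-triangular jump matrix [[1, 0], [exp((4/3)z^{3/2} + 2 a z^{1/2}), 1]] (principal branches). -/
def Jlow (a : ℝ) (z : ℂ) : Mat2 :=
  !![1, 0; Complex.exp ((4/3) * z ^ ((3:ℂ)/2) + 2 * (a:ℂ) * z ^ ((1:ℂ)/2)), 1]

/-- Upper-triangular jump matrix [[1, exp(-(4/3)z^{3/2})], [0, 1]]. -/
def Jup (z : ℂ) : Mat2 := !![1, Complex.exp (-(4/3) * z ^ ((3:ℂ)/2)); 0, 1]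

/-- The twist jump matrix [[0, 1], [-1, 0]]. -/
def Jtwist : Mat2 := !![0, 1; -1, 0]

/-- `L` is the boundary value of `M` at `x` taken from within the set `S` (entrywise limit). -/
def BV (M : ℂ → Mat2) (S : Set ℂ) (x : ℂ) (L : Mat2) : Prop :=
  ∀ i j, Filter.Tendsto (fun w => M w i j) (nhdsWithin x S) (nhds (L i j))

/-- `M` stays bounded near the point `p` (off the contour `Sg`). -/
def BoundedNear (Sg : Set ℂ) (M : ℂ → Mat2) (p : ℂ) : Prop :=
  ∃ C ε : ℝ, 0 < ε ∧ ∀ z ∉ Sg, ‖z - p‖ < ε → ∀ i j, ‖M z i j‖ ≤ C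

/-- Near `p` (off the contour `Sg`): the first column of `M` stays bounded while the second
column is O(log|z - p|). -/
def LogColNear (Sg : Set ℂ) (M : ℂ → Mat2) (p : ℂ) : Prop :=
  ∃ C ε : ℝ, 0 < ε ∧ ∀ z ∉ Sg, ‖z - p‖ < ε →
    (∀ i, ‖M z i 0‖ ≤ C) ∧
    (∀ i, ‖M z i 1‖ ≤ C * (1 + |Real.log (‖z - p‖)|))

/-- M(z) = 𝔪(z) · (I + O(1/z)) as z → ∞ off the contour `Sg`. -/
def AsympTwist (Sg : Set ℂ) (M : ℂ → Mat2) : Prop :=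
  ∃ C R : ℝ, ∀ z ∉ Sg, R < ‖z‖ →
    ∀ i j, ‖((twistMat z)⁻¹ * M z - 1) i j‖ ≤ C / ‖z‖

/-- The constant (2π)^{-1/2} e^{iπ/4}. -/
def cJan : ℂ := (Real.sqrt (2 * Real.pi) : ℂ)⁻¹ * Complex.exp ((Real.pi : ℂ) * Complex.I / 4)

/-! For fixed `i j`, the function `f z = (Z z * (Z (conj z))ᴴ) i j` is holomorphic in the upper
half-plane (the reflection `conj ∘ Z ∘ conj` is holomorphic there), has boundary values
`(Z₊ s * (Z₋ s)ᴴ) i j` on `ℝ` and is `O(|z|^{-3/2})`. Cauchy's theorem on the rectangles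
`[-R, R] × [δ, R]`, letting `δ → 0`, bounds the integral of the boundary values over `[-R, R]`
by `O(R^{-1/2})`; letting `R → ∞` gives `0`. -/

open scoped ComplexConjugate Matrix

section UpperHalfPlane

variable {E : Type*} [NormedAddCommGroup E] [NormedSpace ℂ E] {f : ℂ → E}

theorem continuous_comp_add_mul_I (hf : ∀ z : ℂ, 0 < z.im → DifferentiableAt ℂ f z) {δ : ℝ}
    (hδ : 0 < δ) : Continuous fun x : ℝ => f (x + δ * I) :=
  continuous_iff_continuousAt.2 fun x =>
    (hf _ (by simpa using hδ)).continuousAt.comp (by fun_prop)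

/-- Cauchy's theorem on the rectangle `[-R, R] × [δ, R]`: the bottom edge is bounded by the
other three, each of which lies outside the ball of radius `R`. -/
theorem norm_intervalIntegral_add_mul_I_le [CompleteSpace E]
    (hf : ∀ z : ℂ, 0 < z.im → DifferentiableAt ℂ f z)
    {R δ B : ℝ} (hδ : 0 < δ) (hδR : δ ≤ R) (hB : ∀ z : ℂ, 0 < z.im → R ≤ ‖z‖ → ‖f z‖ ≤ B) :
    ‖∫ x in (-R)..R, f (x + δ * I)‖ ≤ 4 * R * B := by
  have hR : 0 < R := hδ.trans_le hδR
  have hdiff : DifferentiableOn ℂ f (uIcc (-R) R ×ℂ uIcc δ R) := fun z hz => by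
    rw [Complex.mem_reProdIm, uIcc_of_le hδR] at hz
    exact (hf z (hδ.trans_le hz.2.1)).differentiableWithinAt
  have hcauchy := Complex.integral_boundary_rect_eq_zero_of_differentiableOn f ⟨-R, δ⟩ ⟨R, R⟩ hdiff
  simp only [push_cast] at hcauchy
  have hbottom : ∫ x in (-R)..R, f (x + δ * I) = (∫ x in (-R)..R, f (x + R * I))
      - I • (∫ y in δ..R, f (R + y * I)) + I • (∫ y in δ..R, f (-R + y * I)) := by
    rw [← sub_eq_zero, ← hcauchy]; abel
  have htop : ‖∫ x in (-R)..R, f (x + R * I)‖ ≤ B * |R - -R| :=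
    intervalIntegral.norm_integral_le_of_norm_le_const fun x _ => hB _ (by simpa using hR)
      (by simpa [abs_of_pos hR] using Complex.abs_im_le_norm (x + R * I))
  have hside : ∀ a : ℂ, |a.re| = R → a.im = 0 →
      ‖∫ y in δ..R, f (a + y * I)‖ ≤ B * |R - δ| := fun a hre him =>
    intervalIntegral.norm_integral_le_of_norm_le_const fun y hy => by
      rw [uIoc_of_le hδR] at hy
      exact hB _ (by simpa [him] using hδ.trans hy.1)
        (by simpa [hre] using Complex.abs_re_le_norm (a + y * I))
  have hB0 : 0 ≤ B :=
    (norm_nonneg _).trans (hB (R * I) (by simpa using hR) (by simp [abs_of_pos hR]))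
  rw [abs_of_nonneg (by linarith : 0 ≤ R - -R)] at htop
  have hright := hside R (by simp [abs_of_pos hR]) (by simp)
  have hleft := hside (-R) (by simp [abs_of_pos hR]) (by simp)
  rw [abs_of_nonneg (by linarith : 0 ≤ R - δ)] at hright hleft
  rw [hbottom]
  refine (norm_add_le _ _).trans ((add_le_add_left (norm_sub_le _ _) _).trans ?_)
  simp only [norm_smul, Complex.norm_I, one_mul]
  nlinarith

variable {g : ℝ → E} {C p : ℝ}

theorem aestronglyMeasurable_of_tendsto_upperHalfPlane
    (hf : ∀ z : ℂ, 0 < z.im → DifferentiableAt ℂ f z)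
    (hfg : ∀ x : ℝ, Tendsto (fun δ : ℝ => f (x + δ * I)) (𝓝[>] 0) (𝓝 (g x))) :
    AEStronglyMeasurable g := by
  have hseq : Tendsto (fun n : ℕ => 1 / ((n : ℝ) + 1)) atTop (𝓝[>] 0) :=
    tendsto_nhdsWithin_iff.2
      ⟨tendsto_one_div_add_atTop_nhds_zero_nat,
        .of_forall fun _ => mem_Ioi.2 Nat.one_div_pos_of_nat⟩
  exact aestronglyMeasurable_of_tendsto_ae atTop
    (fun n : ℕ => (continuous_comp_add_mul_I hf (δ := 1 / ((n : ℝ) + 1))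
      (by positivity)).aestronglyMeasurable)
    (ae_of_all _ fun x => (hfg x).comp hseq)

omit [NormedSpace ℂ E] in
theorem norm_le_of_tendsto_upperHalfPlane
    (hfg : ∀ x : ℝ, Tendsto (fun δ : ℝ => f (x + δ * I)) (𝓝[>] 0) (𝓝 (g x)))
    (hdecay : ∀ z : ℂ, 0 < z.im → ‖f z‖ ≤ C * (1 + ‖z‖) ^ (-p)) (x : ℝ) :
    ‖g x‖ ≤ C * (1 + |x|) ^ (-p) := by
  have hz : Tendsto (fun δ : ℝ => (x : ℂ) + δ * I) (𝓝[>] 0) (𝓝 x) :=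
    tendsto_nhdsWithin_of_tendsto_nhds <|
      (by fun_prop : Continuous fun δ : ℝ => (x : ℂ) + δ * I).tendsto' 0 x (by simp)
  have hbound : Continuous fun z : ℂ => C * (1 + ‖z‖) ^ (-p) :=
    continuous_const.mul <| (continuous_const.add continuous_norm).rpow_const
      fun z => .inl (by positivity : (0 : ℝ) < 1 + ‖z‖).ne'
  simpa using le_of_tendsto_of_tendsto (hfg x).norm ((hbound.tendsto _).comp hz)
    (eventually_mem_nhdsWithin.mono fun δ hδ => hdecay _ (by simpa using hδ))

theorem integrable_of_tendsto_upperHalfPlane (hp : 1 < p)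
    (hf : ∀ z : ℂ, 0 < z.im → DifferentiableAt ℂ f z)
    (hfg : ∀ x : ℝ, Tendsto (fun δ : ℝ => f (x + δ * I)) (𝓝[>] 0) (𝓝 (g x)))
    (hdecay : ∀ z : ℂ, 0 < z.im → ‖f z‖ ≤ C * (1 + ‖z‖) ^ (-p)) :
    Integrable g :=
  ((integrable_one_add_norm (by simpa using hp)).const_mul C).mono'
    (aestronglyMeasurable_of_tendsto_upperHalfPlane hf hfg)
    (ae_of_all _ fun x => by simpa using norm_le_of_tendsto_upperHalfPlane hfg hdecay x)

theorem norm_intervalIntegral_le_of_tendsto_upperHalfPlane [CompleteSpace E] (hp : 0 ≤ p)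
    (hf : ∀ z : ℂ, 0 < z.im → DifferentiableAt ℂ f z)
    (hfg : ∀ x : ℝ, Tendsto (fun δ : ℝ => f (x + δ * I)) (𝓝[>] 0) (𝓝 (g x)))
    (hdecay : ∀ z : ℂ, 0 < z.im → ‖f z‖ ≤ C * (1 + ‖z‖) ^ (-p)) {R : ℝ} (hR : 0 < R) :
    ‖∫ x in (-R)..R, g x‖ ≤ 4 * C * (1 + R) ^ (1 - p) := by
  have hC : 0 ≤ C := nonneg_of_mul_nonneg_left ((norm_nonneg _).trans (hdecay I (by simp)))
    (by positivity)
  have hlim : Tendsto (fun δ : ℝ => ∫ x in (-R)..R, f (x + δ * I)) (𝓝[>] 0)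
      (𝓝 (∫ x in (-R)..R, g x)) :=
    intervalIntegral.tendsto_integral_filter_of_dominated_convergence (fun _ => C)
      (eventually_mem_nhdsWithin.mono fun δ hδ =>
        (continuous_comp_add_mul_I hf hδ).aestronglyMeasurable)
      (eventually_mem_nhdsWithin.mono fun δ hδ => ae_of_all _ fun x _ =>
        (hdecay _ (by simpa using hδ)).trans <| mul_le_of_le_one_right hC <|
          Real.rpow_le_one_of_one_le_of_nonpos (by simp) (by linarith))
      intervalIntegrable_const (ae_of_all _ fun x _ => hfg x)
  calc ‖∫ x in (-R)..R, g x‖ ≤ 4 * R * (C * (1 + R) ^ (-p)) := by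
        refine le_of_tendsto hlim.norm ?_
        filter_upwards [Ioo_mem_nhdsGT hR] with δ hδ
        refine norm_intervalIntegral_add_mul_I_le hf hδ.1 hδ.2.le fun z hz hRz => ?_
        exact (hdecay z hz).trans <| mul_le_mul_of_nonneg_left
          (Real.rpow_le_rpow_of_nonpos (by positivity) (by linarith) (by linarith)) hC
    _ ≤ 4 * (1 + R) * (C * (1 + R) ^ (-p)) := by gcongr; linarith
    _ = 4 * C * (1 + R) ^ (1 - p) := by
        rw [sub_eq_add_neg, Real.rpow_add (by positivity), Real.rpow_one]; ring

theorem integral_eq_zero_of_tendsto_upperHalfPlane [CompleteSpace E] (hp : 1 < p)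
    (hf : ∀ z : ℂ, 0 < z.im → DifferentiableAt ℂ f z)
    (hfg : ∀ x : ℝ, Tendsto (fun δ : ℝ => f (x + δ * I)) (𝓝[>] 0) (𝓝 (g x)))
    (hdecay : ∀ z : ℂ, 0 < z.im → ‖f z‖ ≤ C * (1 + ‖z‖) ^ (-p)) :
    ∫ x, g x = 0 := by
  have hlim := intervalIntegral_tendsto_integral
    (integrable_of_tendsto_upperHalfPlane hp hf hfg hdecay) tendsto_neg_atTop_atBot tendsto_id
  have hbound : Tendsto (fun R : ℝ => 4 * C * (1 + R) ^ (1 - p)) atTop (𝓝 0) := by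
    have := (tendsto_rpow_neg_atTop (by linarith : 0 < p - 1)).comp
      (tendsto_atTop_add_const_left _ 1 tendsto_id)
    simpa [Function.comp_def] using this.const_mul (4 * C)
  refine norm_le_zero_iff.1 (le_of_tendsto_of_tendsto hlim.norm hbound ?_)
  filter_upwards [eventually_gt_atTop 0] with R hR
  exact norm_intervalIntegral_le_of_tendsto_upperHalfPlane (by linarith) hf hfg hdecay hR

end UpperHalfPlane

section ReflectedProduct

variable {m n o : Type*} [Fintype n] {i : m} {j : o}

theorem norm_mul_conjTranspose_apply_le {A : Matrix m n ℂ} {B : Matrix o n ℂ} {a b : ℝ}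
    (hA : ∀ k, ‖A i k‖ ≤ a) (hB : ∀ k, ‖B j k‖ ≤ b) :
    ‖(A * Bᴴ) i j‖ ≤ Fintype.card n * (a * b) := by
  simp only [Matrix.mul_apply, Matrix.conjTranspose_apply]
  calc ‖∑ k, A i k * star (B j k)‖ ≤ ∑ _k : n, a * b := norm_sum_le_of_le _ fun k _ => by
        rw [norm_mul, norm_star]
        exact mul_le_mul (hA k) (hB k) (norm_nonneg _) ((norm_nonneg _).trans (hA k))
    _ = Fintype.card n * (a * b) := by simp

theorem Filter.Tendsto.mul_conjTranspose_apply {α : Type*} {l : Filter α}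
    {A : α → Matrix m n ℂ} {B : α → Matrix o n ℂ} {A₀ : Matrix m n ℂ} {B₀ : Matrix o n ℂ}
    (hA : ∀ k, Tendsto (fun a => A a i k) l (𝓝 (A₀ i k)))
    (hB : ∀ k, Tendsto (fun a => B a j k) l (𝓝 (B₀ j k))) :
    Tendsto (fun a => (A a * (B a)ᴴ) i j) l (𝓝 ((A₀ * B₀ᴴ) i j)) := by
  simp only [Matrix.mul_apply, Matrix.conjTranspose_apply]
  exact tendsto_finsetSum _ fun k _ => (hA k).mul (hB k).star

theorem differentiableAt_mul_conjTranspose_comp_conj_apply {Z : ℂ → Matrix m n ℂ}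
    {W : ℂ → Matrix o n ℂ} {z : ℂ} (hZ : ∀ k, DifferentiableAt ℂ (fun w => Z w i k) z)
    (hW : ∀ k, DifferentiableAt ℂ (fun w => W w j k) (conj z)) :
    DifferentiableAt ℂ (fun w => (Z w * (W (conj w))ᴴ) i j) z := by
  simp only [Matrix.mul_apply, Matrix.conjTranspose_apply]
  exact DifferentiableAt.fun_sum fun k _ =>
    (hZ k).mul (by simpa [Function.comp_def] using (hW k).conj_conj)

end ReflectedProduct

theorem boundary_values_orthogonality_general
    (Z : ℂ → Mat2) (Zp Zm : ℝ → Mat2)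
    (han : ∀ z : ℂ, z.im ≠ 0 → ∀ i j, DifferentiableAt ℂ (fun w => Z w i j) z)
    (hbvp : ∀ (x : ℝ) i j, Filter.Tendsto (fun δ : ℝ => Z ((x:ℂ) + (δ:ℂ) * Complex.I) i j)
      (𝓝[>] (0:ℝ)) (𝓝 (Zp x i j)))
    (hbvm : ∀ (x : ℝ) i j, Filter.Tendsto (fun δ : ℝ => Z ((x:ℂ) - (δ:ℂ) * Complex.I) i j)
      (𝓝[>] (0:ℝ)) (𝓝 (Zm x i j)))
    (c : ℝ)
    (hdecay : ∀ z : ℂ, z.im ≠ 0 → ∀ i j,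
      ‖Z z i j‖ ≤ c * (1 + ‖z‖) ^ (-(3:ℝ)/4)) :
    ∀ i j, (∫ s : ℝ, (Zp s * (Zm s).conjTranspose) i j) = 0 := by
  intro i j
  refine integral_eq_zero_of_tendsto_upperHalfPlane (f := fun z => (Z z * (Z (conj z))ᴴ) i j)
    (C := 2 * c ^ 2) (p := 3 / 2) (by norm_num) (fun z hz => ?_) (fun x => ?_) (fun z hz => ?_)
  · exact differentiableAt_mul_conjTranspose_comp_conj_apply (han z hz.ne' i)
      (han _ (by simpa using hz.ne') j)
  · have hconj (δ : ℝ) : conj ((x : ℂ) + δ * I) = x - δ * I := by simp [sub_eq_add_neg]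
    simpa only [hconj] using Tendsto.mul_conjTranspose_apply (hbvp x i) (hbvm x j)
  · have hz' : (conj z).im ≠ 0 := by simpa using hz.ne'
    calc _ ≤ 2 * ((c * (1 + ‖z‖) ^ (-(3:ℝ)/4)) * (c * (1 + ‖z‖) ^ (-(3:ℝ)/4))) := by
          simpa using norm_mul_conjTranspose_apply_le (hdecay z hz.ne' i)
            (by simpa using hdecay _ hz' j)
      _ = 2 * c ^ 2 * (1 + ‖z‖) ^ (-(3 / 2 : ℝ)) := by
          rw [mul_mul_mul_comm, ← Real.rpow_add (by positivity)]; ring_nf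

/-- Orthogonality of upper and lower boundary values: for Z analytic off ℝ with continuous
boundary values Z₊, Z₋ and decay ‖Z(ζ)‖ ≤ c(1+|ζ|)^{-3/4}, one has ∫_ℝ Z₊(s) Z₋(s)* ds = 0. -/
theorem boundary_values_orthogonality
    (Z : ℂ → Mat2) (Zp Zm : ℝ → Mat2)
    (han : ∀ z : ℂ, z.im ≠ 0 → ∀ i j, DifferentiableAt ℂ (fun w => Z w i j) z)
    (hbvp : ∀ (x : ℝ) i j, Filter.Tendsto (fun δ : ℝ => Z ((x:ℂ) + (δ:ℂ) * Complex.I) i j)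
      (𝓝[>] (0:ℝ)) (𝓝 (Zp x i j)))
    (hbvm : ∀ (x : ℝ) i j, Filter.Tendsto (fun δ : ℝ => Z ((x:ℂ) - (δ:ℂ) * Complex.I) i j)
      (𝓝[>] (0:ℝ)) (𝓝 (Zm x i j)))
    (hcp : ∀ i j, Continuous (fun x : ℝ => Zp x i j))
    (hcm : ∀ i j, Continuous (fun x : ℝ => Zm x i j))
    (c : ℝ)
    (hdecay : ∀ z : ℂ, z.im ≠ 0 → ∀ i j,
      ‖Z z i j‖ ≤ c * (1 + ‖z‖) ^ (-(3:ℝ)/4)) :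
    ∀ i j, (∫ s : ℝ, (Zp s * (Zm s).conjTranspose) i j) = 0 :=
  boundary_values_orthogonality_general Z Zp Zm han hbvp hbvm c hdecay
end
end

section
/- Lemma (continuity of the RHP← jump matrices in the parameter). Fix α ≤ 0 and let γ± = {r e^{±2πi/3} : r > 0}. For β ≤ 0 define h_{α,β}(z) = exp((4/3)z^{3/2}) · ( exp(2βz^{1/2}) − exp(2αz^{1/2}) ) (principal branches). Then there is a constant C = C(α) such that for all β ≤ 0 with |β − α| ≤ 1: sup_{z ∈ γ±} |h_{α,β}(z)| ≤ C|β − α| and ∫₀^∞ |h_{α,β}(r e^{±2πi/3})|² dr ≤ C²|β − α|². In particular the L^∞ and L² norms of h_{α,β} on γ± tend to 0 as β → α. -/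
/-!
On the rays `z = r e^{±2πi/3}` one has `z^{3/2} = -r^{3/2}`, so the prefactor `e^{(4/3) z^{3/2}}`
decays like `e^{-(4/3) r^{3/2}}`. Since `Re z^{1/2} ≥ 0` and `α, β ≤ 0`, both exponents
`2α z^{1/2}` and `2β z^{1/2}` lie in the closed left half-plane, on which `exp` is 1-Lipschitz;
hence `|h_{α,β}(r e^{±2πi/3})| ≤ 2 √r e^{-(4/3) r^{3/2}} |β - α|`. The square of this envelope is
at most `e⁴ e^{-r}`, which yields both estimates with `C = e²`.
-/
noncomputable section

open Complex MeasureTheory Filter Topology Set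

/-- The (2,1) entry of the difference of the RHP← jump matrices at parameter values b and a:
h_{a,b}(z) = e^{(4/3)z^{3/2}}·(e^{2bz^{1/2}} - e^{2az^{1/2}}) (principal branches). -/
def jumpDiff (a b : ℝ) (z : ℂ) : ℂ :=
  Complex.exp ((4/3) * z ^ ((3:ℂ)/2)) *
    (Complex.exp (2 * (b:ℂ) * z ^ ((1:ℂ)/2)) - Complex.exp (2 * (a:ℂ) * z ^ ((1:ℂ)/2)))

namespace Complex

theorem norm_exp_sub_exp_le_of_re_nonpos {x y : ℂ} (hx : x.re ≤ 0) (hy : y.re ≤ 0) :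
    ‖exp x - exp y‖ ≤ ‖x - y‖ := by
  simpa using Convex.norm_image_sub_le_of_norm_hasDerivWithin_le
    (fun z _ => (hasDerivAt_exp z).hasDerivWithinAt)
    (fun z (hz : z.re ≤ 0) => (norm_exp z).trans_le (Real.exp_le_one_iff.mpr hz))
    (convex_halfSpace_re_le 0) hy hx

theorem re_cpow_one_half_nonneg (z : ℂ) : 0 ≤ (z ^ ((1 : ℂ) / 2)).re := by
  rw [one_div, cpow_inv_two_re]
  exact Real.sqrt_nonneg _

theorem ofReal_mul_exp_mul_I_cpow {r : ℝ} (hr : 0 < r) {θ : ℝ} (hθ : θ ∈ Ioc (-Real.pi) Real.pi)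
    (c : ℂ) : ((r : ℂ) * exp (θ * I)) ^ c = (r : ℂ) ^ c * exp (θ * I * c) := by
  have hr' : (r : ℂ) ≠ 0 := ofReal_ne_zero.mpr hr.ne'
  have hlog : log (exp (θ * I)) = θ * I := log_exp (by simpa using hθ.1) (by simpa using hθ.2)
  rw [cpow_def_of_ne_zero (mul_ne_zero hr' (exp_ne_zero _)), log_ofReal_mul hr (exp_ne_zero _),
    hlog, add_mul, exp_add, ofReal_log hr.le, ← cpow_def_of_ne_zero hr']

theorem re_ofReal_mul_exp_mul_I_cpow {r : ℝ} (hr : 0 < r) {θ : ℝ}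
    (hθ : θ ∈ Ioc (-Real.pi) Real.pi) (c : ℝ) :
    (((r : ℂ) * exp (θ * I)) ^ (c : ℂ)).re = r ^ c * Real.cos (c * θ) := by
  rw [ofReal_mul_exp_mul_I_cpow hr hθ, ← ofReal_cpow hr.le, re_ofReal_mul,
    show (θ : ℂ) * I * c = ((c * θ : ℝ) : ℂ) * I by push_cast; ring, exp_ofReal_mul_I_re]

end Complex

theorem sq_exp_neg_cube_mul_two_mul_le {t : ℝ} (ht : 0 ≤ t) :
    (Real.exp (-(4 / 3) * t ^ 3) * (2 * t)) ^ 2 ≤ Real.exp 2 ^ 2 * Real.exp (-t ^ 2) := by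
  have hpoly : (2 * t) ^ 2 ≤ ((8 / 3) * t ^ 3 - t ^ 2 + 4) + 1 := by
    nlinarith [mul_nonneg ht (sq_nonneg (t - 1)), sq_nonneg (t - 1)]
  calc (Real.exp (-(4 / 3) * t ^ 3) * (2 * t)) ^ 2
      = (2 * t) ^ 2 * Real.exp (-(8 / 3) * t ^ 3) := by
        rw [mul_pow, ← Real.exp_nat_mul]; ring_nf
    _ ≤ Real.exp ((8 / 3) * t ^ 3 - t ^ 2 + 4) * Real.exp (-(8 / 3) * t ^ 3) := by
        gcongr; linarith [Real.add_one_le_exp ((8 / 3) * t ^ 3 - t ^ 2 + 4)]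
    _ = Real.exp 2 ^ 2 * Real.exp (-t ^ 2) := by
        rw [← Real.exp_nat_mul, ← Real.exp_add, ← Real.exp_add]; ring_nf

theorem setIntegral_Ioi_sq_le_of_sq_le_mul_exp_neg {f : ℝ → ℝ} {M : ℝ}
    (hf : ∀ r, 0 < r → f r ^ 2 ≤ M * Real.exp (-r)) : ∫ r in Ioi 0, f r ^ 2 ≤ M :=
  calc ∫ r in Ioi 0, f r ^ 2
      ≤ ∫ r in Ioi 0, M * Real.exp (-r) :=
        integral_mono_of_nonneg (.of_forall fun r => sq_nonneg (f r))
          ((integrableOn_exp_neg_Ioi 0).const_mul M)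
          ((ae_restrict_iff' measurableSet_Ioi).mpr (.of_forall hf))
    _ = M := by rw [integral_const_mul, integral_exp_neg_Ioi_zero, mul_one]

theorem norm_jumpDiff_le {a b : ℝ} (ha : a ≤ 0) (hb : b ≤ 0) (z : ℂ) :
    ‖jumpDiff a b z‖ ≤
      Real.exp ((4 / 3) * (z ^ ((3 : ℂ) / 2)).re) * (2 * ‖z‖ ^ ((1 : ℝ) / 2) * |b - a|) := by
  have hw : ‖z ^ ((1 : ℂ) / 2)‖ = ‖z‖ ^ ((1 : ℝ) / 2) := by
    simpa using norm_cpow_real z (1 / 2)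
  have hre (t : ℝ) (ht : t ≤ 0) : (2 * (t : ℂ) * z ^ ((1 : ℂ) / 2)).re ≤ 0 := by
    simpa using mul_nonpos_of_nonpos_of_nonneg (by linarith : 2 * t ≤ 0) (re_cpow_one_half_nonneg z)
  have hdiff : ‖exp (2 * (b : ℂ) * z ^ ((1 : ℂ) / 2)) - exp (2 * (a : ℂ) * z ^ ((1 : ℂ) / 2))‖
      ≤ 2 * ‖z ^ ((1 : ℂ) / 2)‖ * |b - a| :=
    calc _ ≤ ‖2 * (b : ℂ) * z ^ ((1 : ℂ) / 2) - 2 * (a : ℂ) * z ^ ((1 : ℂ) / 2)‖ :=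
          norm_exp_sub_exp_le_of_re_nonpos (hre b hb) (hre a ha)
      _ = 2 * ‖z ^ ((1 : ℂ) / 2)‖ * |b - a| := by
          rw [← sub_mul, ← mul_sub, ← ofReal_sub, norm_mul, norm_mul, norm_real,
            Real.norm_eq_abs, Complex.norm_two]
          ring
  rw [jumpDiff, norm_mul, norm_exp, ← hw]
  gcongr
  simp

theorem norm_jumpDiff_ofReal_mul_exp_mul_I_le {a b : ℝ} (ha : a ≤ 0) (hb : b ≤ 0) {r : ℝ}
    (hr : 0 < r) {θ : ℝ} (hθ : θ ∈ Ioc (-Real.pi) Real.pi) :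
    ‖jumpDiff a b (r * exp (θ * I))‖ ≤
      Real.exp ((4 / 3) * (√r ^ 3 * Real.cos (3 / 2 * θ))) * (2 * √r * |b - a|) := by
  have h32 := re_ofReal_mul_exp_mul_I_cpow hr hθ (3 / 2)
  have hnorm : ‖(r : ℂ) * exp (θ * I)‖ = r := by simp [norm_exp, hr.le]
  convert norm_jumpDiff_le ha hb (r * exp (θ * I)) using 5
  · push_cast at h32
    rw [h32, Real.sqrt_eq_rpow, ← Real.rpow_natCast, ← Real.rpow_mul hr.le]
    norm_num
  · rw [hnorm, Real.sqrt_eq_rpow]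

theorem sq_norm_jumpDiff_ray_le {a b : ℝ} (ha : a ≤ 0) (hb : b ≤ 0) {θ : ℝ}
    (hθ : θ ∈ Ioc (-Real.pi) Real.pi) (hcos : Real.cos (3 / 2 * θ) = -1) {r : ℝ} (hr : 0 < r) :
    ‖jumpDiff a b (r * exp (θ * I))‖ ^ 2 ≤ Real.exp 2 ^ 2 * |b - a| ^ 2 * Real.exp (-r) := by
  have hbound := norm_jumpDiff_ofReal_mul_exp_mul_I_le ha hb hr hθ
  rw [hcos] at hbound
  calc ‖jumpDiff a b (r * exp (θ * I))‖ ^ 2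
      ≤ (Real.exp (-(4 / 3) * √r ^ 3) * (2 * √r)) ^ 2 * |b - a| ^ 2 := by
        rw [← mul_pow]
        gcongr
        exact hbound.trans_eq (by ring_nf)
    _ ≤ Real.exp 2 ^ 2 * Real.exp (-√r ^ 2) * |b - a| ^ 2 := by
        gcongr
        exact sq_exp_neg_cube_mul_two_mul_le (Real.sqrt_nonneg r)
    _ = Real.exp 2 ^ 2 * |b - a| ^ 2 * Real.exp (-r) := by
        rw [Real.sq_sqrt hr.le]; ring

theorem jumpDiff_ray_estimates {a b : ℝ} (ha : a ≤ 0) (hb : b ≤ 0) {θ : ℝ}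
    (hθ : θ ∈ Ioc (-Real.pi) Real.pi) (hcos : Real.cos (3 / 2 * θ) = -1) :
    (∀ r : ℝ, 0 < r → ‖jumpDiff a b (r * exp (θ * I))‖ ≤ Real.exp 2 * |b - a|) ∧
      ∫ r in Ioi (0 : ℝ), ‖jumpDiff a b (r * exp (θ * I))‖ ^ 2 ≤ Real.exp 2 ^ 2 * |b - a| ^ 2 := by
  refine ⟨fun r hr => ?_, setIntegral_Ioi_sq_le_of_sq_le_mul_exp_neg
    fun r hr => sq_norm_jumpDiff_ray_le ha hb hθ hcos hr⟩
  refine (pow_le_pow_iff_left₀ (norm_nonneg _) (by positivity) two_ne_zero).mp ?_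
  calc ‖jumpDiff a b (r * exp (θ * I))‖ ^ 2
      ≤ Real.exp 2 ^ 2 * |b - a| ^ 2 * Real.exp (-r) := sq_norm_jumpDiff_ray_le ha hb hθ hcos hr
    _ ≤ (Real.exp 2 * |b - a|) ^ 2 := by
        rw [mul_pow]
        exact mul_le_of_le_one_right (by positivity) (Real.exp_le_one_iff.mpr (by linarith))

/-- Continuity of the RHP← jump matrices in the parameter: on the rays arg z = ±2π/3 the
difference of jump entries is O(|β-α|) in L^∞ and in L². -/
theorem jump_matrix_parameter_continuity (a : ℝ) (ha : a ≤ 0) :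
    ∃ C : ℝ, ∀ b : ℝ, b ≤ 0 → |b - a| ≤ 1 →
      (∀ r : ℝ, 0 < r →
        ‖jumpDiff a b ((r:ℂ) * Complex.exp (2 * (Real.pi : ℂ) * Complex.I / 3))‖
          ≤ C * |b - a|) ∧
      (∀ r : ℝ, 0 < r →
        ‖jumpDiff a b ((r:ℂ) * Complex.exp (-(2 * (Real.pi : ℂ) * Complex.I) / 3))‖
          ≤ C * |b - a|) ∧
      ((∫ r in Ioi (0:ℝ),
          (‖jumpDiff a b ((r:ℂ) * Complex.exp (2 * (Real.pi : ℂ) * Complex.I / 3))‖)^2)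
        ≤ C^2 * |b - a|^2) ∧
      ((∫ r in Ioi (0:ℝ),
          (‖jumpDiff a b ((r:ℂ) * Complex.exp (-(2 * (Real.pi : ℂ) * Complex.I) / 3))‖)^2)
        ≤ C^2 * |b - a|^2) := by
  refine ⟨Real.exp 2, fun b hb _ => ?_⟩
  have hπ := Real.pi_pos
  have hplus : 2 * (Real.pi : ℂ) * I / 3 = ((2 * Real.pi / 3 : ℝ) : ℂ) * I := by push_cast; ring
  have hminus : -(2 * (Real.pi : ℂ) * I) / 3 = ((-(2 * Real.pi / 3) : ℝ) : ℂ) * I := by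
    push_cast; ring
  obtain ⟨sup_plus, int_plus⟩ := jumpDiff_ray_estimates ha hb (θ := 2 * Real.pi / 3)
    ⟨by linarith, by linarith⟩ (by rw [show 3 / 2 * (2 * Real.pi / 3) = Real.pi by ring,
      Real.cos_pi])
  obtain ⟨sup_minus, int_minus⟩ := jumpDiff_ray_estimates ha hb (θ := -(2 * Real.pi / 3))
    ⟨by linarith, by linarith⟩ (by rw [show 3 / 2 * -(2 * Real.pi / 3) = -Real.pi by ring,
      Real.cos_neg, Real.cos_pi])
  rw [hplus, hminus]
  exact ⟨sup_plus, sup_minus, int_plus, int_minus⟩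
end
end
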